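/- Let π : P → H be a surjective morphism of Hopf algebras over a field k, Δ_R := (id ⊗ π) ∘ Δ_P, M := { x ∈ P : Δ_R(x) = x ⊗ 1 }, V := M ∩ ker ε_P, and Ω¹M := ker(m_P) ∩ (M ⊗ M) ⊆ P ⊗ P. Let P·Ω¹M denote the left P-submodule of P ⊗ P generated by Ω¹M, where P acts by multiplication on the first tensor factor. Then: (a) for every v ∈ V, θ(v) := Σ S(v₍₁₎) ⊗ v₍₂₎ = Σ S(v₍₁₎)·(1 ⊗ v₍₂₎ − v₍₂₎ ⊗ 1) belongs to P·Ω¹M; (b) the maps Φ : P ⊗ V → P ⊗ P, Φ(p ⊗ v) = Σ p S(v₍₁₎) ⊗ v₍₂₎, and Ψ : P ⊗ P → P ⊗ P, Ψ(a ⊗ b) = Σ a b₍₁₎ ⊗ b₍₂₎, restrict to mutually inverse k-linear bijections between P ⊗ V and P·Ω¹M. -/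

import Mathlib

open TensorProduct

noncomputable section

variable {k P H : Type*} [Field k] [Ring P] [Ring H] [HopfAlgebra k P] [HopfAlgebra k H]

/-- The right coaction `Δ_R = (id ⊗ π) ∘ Δ_P : P → P ⊗ H`. -/
noncomputable def deltaR (π : P →ₐc[k] H) : P →ₗ[k] P ⊗[k] H :=
  LinearMap.lTensor P π.toLinearMap ∘ₗ Coalgebra.comul

/-- The coinvariant subspace `M = {x ∈ P : Δ_R(x) = x ⊗ 1}` as a submodule. -/
noncomputable def coinvSub (π : P →ₐc[k] H) : Submodule k P :=
  LinearMap.ker (deltaR π - (TensorProduct.mk k P H).flip 1)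

/-- `V = M ∩ ker ε_P`. -/
noncomputable def Vsub (π : P →ₐc[k] H) : Submodule k P :=
  coinvSub π ⊓ LinearMap.ker (Coalgebra.counit (R := k) (A := P))

/-- `Ω¹M = ker(m_P) ∩ (M ⊗ M)` inside `P ⊗ P`. -/
noncomputable def omegaOneM (π : P →ₐc[k] H) : Submodule k (P ⊗[k] P) :=
  LinearMap.ker (LinearMap.mul' k P)
    ⊓ LinearMap.range (TensorProduct.map (coinvSub π).subtype (coinvSub π).subtype)

/-- `P·Ω¹M`: the left `P`-submodule of `P ⊗ P` generated by `Ω¹M`. -/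
noncomputable def POmegaOneM (π : P →ₐc[k] H) : Submodule k (P ⊗[k] P) :=
  Submodule.span k
    {x : P ⊗[k] P | ∃ p : P, ∃ ω ∈ omegaOneM π, x = (LinearMap.mulLeft k p).rTensor P ω}

/-- `θ(v) = Σ S(v₍₁₎) ⊗ v₍₂₎`. -/
noncomputable def thetaMap : P →ₗ[k] P ⊗[k] P :=
  (HopfAlgebra.antipode (R := k) (A := P)).rTensor P ∘ₗ Coalgebra.comul

/-- The universal differential `d : P → P ⊗ P`, `p ↦ 1 ⊗ p − p ⊗ 1`. -/
noncomputable def dUniv : P →ₗ[k] P ⊗[k] P :=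
  TensorProduct.mk k P P 1 - (TensorProduct.mk k P P).flip 1

/-- `v ↦ Σ S(v₍₁₎)·(1 ⊗ v₍₂₎ − v₍₂₎ ⊗ 1)`. -/
noncomputable def thetaMap' : P →ₗ[k] P ⊗[k] P :=
  (LinearMap.mul' k P).rTensor P
    ∘ₗ (TensorProduct.assoc k P P P).symm.toLinearMap
    ∘ₗ TensorProduct.map (HopfAlgebra.antipode (R := k) (A := P)) dUniv
    ∘ₗ Coalgebra.comul

/-- `Φ(p ⊗ v) = Σ p S(v₍₁₎) ⊗ v₍₂₎`, defined on all of `P ⊗ P`. -/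
noncomputable def PhiFull : P ⊗[k] P →ₗ[k] P ⊗[k] P :=
  (LinearMap.mul' k P).rTensor P
    ∘ₗ (TensorProduct.assoc k P P P).symm.toLinearMap
    ∘ₗ LinearMap.lTensor P thetaMap

/-- `Ψ(a ⊗ b) = Σ a b₍₁₎ ⊗ b₍₂₎`. -/
noncomputable def PsiFull : P ⊗[k] P →ₗ[k] P ⊗[k] P :=
  (LinearMap.mul' k P).rTensor P
    ∘ₗ (TensorProduct.assoc k P P P).symm.toLinearMap
    ∘ₗ LinearMap.lTensor P (Coalgebra.comul (R := k) (A := P))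

/-- `Φ` restricted to `P ⊗ V`. -/
noncomputable def PhiV (π : P →ₐc[k] H) : P ⊗[k] ↥(Vsub π) →ₗ[k] P ⊗[k] P :=
  PhiFull ∘ₗ LinearMap.lTensor P (Vsub π).subtype

/-!
`Φ` and `Ψ` are the left `P`-linear extensions `a ⊗ b ↦ a · T b` of `T = θ` and `T = Δ`.
Composites of such extensions are again extensions, so `Ψ ∘ Φ` and `Φ ∘ Ψ` extend `Ψ ∘ θ` and
`Φ ∘ Δ`, which are `b ↦ 1 ⊗ b` by coassociativity and the antipode axioms: `Φ` and `Ψ` are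
inverse automorphisms of `P ⊗ P`.

Since `Δ_R` is compatible with `Δ`, `Δ(M) ⊆ P ⊗ M`, where flatness identifies `P ⊗ M` with the
kernel of `id ⊗ (Δ_R - (· ⊗ 1))`. Hence for `v ∈ V` we get `θ v = Σ S(v₍₁₎) · d(v₍₂₎)` with
`v₍₂₎ ∈ M` and `d m = 1 ⊗ m - m ⊗ 1 ∈ Ω¹M`, which gives (a) and `Φ(P ⊗ V) ⊆ P·Ω¹M`. Conversely
`Ψ` maps `P·Ω¹M` into `P ⊗ M`, and into `ker (id ⊗ ε)` because `(id ⊗ ε)(Ψ(a ⊗ b)) = ab ⊗ 1`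
and `Ω¹M ⊆ ker m_P`; so `Ψ(P·Ω¹M) ⊆ P ⊗ V`.
-/

open LinearMap Coalgebra HopfAlgebra

theorem range_lTensor_subtype_of_eq_ker {R M A B : Type*} [CommRing R] [AddCommGroup M]
    [Module R M] [Module.Flat R M] [AddCommGroup A] [Module R A] [AddCommGroup B] [Module R B]
    {N : Submodule R A} {g : A →ₗ[R] B} (h : N = ker g) :
    range (N.subtype.lTensor M) = ker (g.lTensor M) := by
  subst h
  exact (exact_iff.mp (Module.Flat.lTensor_exact M (exact_subtype_ker_map g))).symm

section TensorMaps

variable {R M A B C : Type*} [CommSemiring R] [AddCommMonoid M] [Module R M]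
  [AddCommMonoid A] [Module R A] [AddCommMonoid B] [Module R B] [AddCommMonoid C] [Module R C]

theorem ker_lTensor_prod (f : A →ₗ[R] B) (g : A →ₗ[R] C) :
    ker ((f.prod g).lTensor M) = ker (f.lTensor M) ⊓ ker (g.lTensor M) := by
  have h : (prodRight R R M B C).toLinearMap ∘ₗ (f.prod g).lTensor M
      = (f.lTensor M).prod (g.lTensor M) := by
    refine TensorProduct.ext' fun m a => ?_
    simp
  rw [← ker_prod, ← h, ker_comp, LinearEquiv.ker, Submodule.comap_bot]

theorem lTensor_flip_mk_apply (b : B) (x : M ⊗[R] A) :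
    ((TensorProduct.mk R A B).flip b).lTensor M x = TensorProduct.assoc R M A B (x ⊗ₜ b) := by
  induction x using TensorProduct.induction_on with
  | zero => simp
  | tmul m a => simp
  | add x y hx hy => simp only [map_add, hx, hy, add_tmul]

end TensorMaps

section ExtendLeft

variable {R A M N L : Type*} [CommSemiring R] [Semiring A] [Algebra R A]
  [AddCommMonoid M] [Module R M] [AddCommMonoid N] [Module R N] [AddCommMonoid L] [Module R L]

theorem rTensor_mulLeft_apply (a : A) (x : A ⊗[R] N) : (mulLeft R a).rTensor N x = a • x := by
  induction x using TensorProduct.induction_on with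
  | zero => simp
  | tmul b n => simp [smul_tmul']
  | add x y hx hy => simp [hx, hy]

theorem lTensor_apply_smul (g : M →ₗ[R] N) (a : A) (x : A ⊗[R] M) :
    g.lTensor A (a • x) = a • g.lTensor A x :=
  (AlgebraTensorModule.lTensor A A g).map_smul a x

theorem smul_mem_range_lTensor {N' : Submodule R N} (a : A) {x : A ⊗[R] N}
    (hx : x ∈ range (N'.subtype.lTensor A)) : a • x ∈ range (N'.subtype.lTensor A) := by
  obtain ⟨t, rfl⟩ := hx
  exact ⟨a • t, lTensor_apply_smul _ a t⟩

def extendLeft (T : M →ₗ[R] A ⊗[R] N) : A ⊗[R] M →ₗ[R] A ⊗[R] N :=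
  (mul' R A).rTensor N ∘ₗ (TensorProduct.assoc R A A N).symm.toLinearMap ∘ₗ T.lTensor A

theorem extendLeft_tmul (T : M →ₗ[R] A ⊗[R] N) (a : A) (m : M) :
    extendLeft T (a ⊗ₜ m) = a • T m := by
  simp only [extendLeft, comp_apply, lTensor_tmul, LinearEquiv.coe_coe]
  induction T m using TensorProduct.induction_on with
  | zero => simp
  | tmul b n => simp [smul_tmul']
  | add x y hx hy => simp only [tmul_add, map_add, hx, hy, smul_add]

theorem extendLeft_smul (T : M →ₗ[R] A ⊗[R] N) (a : A) (x : A ⊗[R] M) :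
    extendLeft T (a • x) = a • extendLeft T x := by
  induction x using TensorProduct.induction_on with
  | zero => simp
  | tmul b m => rw [smul_tmul', smul_eq_mul, extendLeft_tmul, extendLeft_tmul, mul_smul]
  | add x y hx hy => simp only [smul_add, map_add, hx, hy]

theorem extendLeft_comp (T₁ : N →ₗ[R] A ⊗[R] L) (T₂ : M →ₗ[R] A ⊗[R] N) :
    extendLeft T₁ ∘ₗ extendLeft T₂ = extendLeft (extendLeft T₁ ∘ₗ T₂) := by
  ext a m
  simp only [AlgebraTensorModule.curry_apply, curry_apply, restrictScalars_apply, comp_apply,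
    extendLeft_tmul, extendLeft_smul]

theorem extendLeft_mk_one : extendLeft (TensorProduct.mk R A M 1) = LinearMap.id := by
  ext a m
  simp [extendLeft_tmul, smul_tmul']

theorem extendLeft_mem_of_mem_range_lTensor {T : M →ₗ[R] A ⊗[R] N} {M' : Submodule R M}
    {W : Submodule R (A ⊗[R] N)} (hW : ∀ (a : A), ∀ w ∈ W, a • w ∈ W)
    (hT : ∀ m ∈ M', T m ∈ W) {x : A ⊗[R] M} (hx : x ∈ range (M'.subtype.lTensor A)) :
    extendLeft T x ∈ W := by
  obtain ⟨t, rfl⟩ := hx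
  induction t using TensorProduct.induction_on with
  | zero => simp
  | tmul a m => simpa [extendLeft_tmul] using hW a _ (hT m m.2)
  | add x y hx hy => simpa using W.add_mem hx hy

end ExtendLeft

theorem phiFull_eq_extendLeft : PhiFull (k := k) (P := P) = extendLeft thetaMap := rfl

theorem psiFull_eq_extendLeft : PsiFull (k := k) (P := P) = extendLeft comul := rfl

theorem psiFull_comp_thetaMap :
    PsiFull ∘ₗ thetaMap (k := k) (P := P) = TensorProduct.mk k P P 1 := by
  simp only [PsiFull, thetaMap, coassoc_simps]
  simp only [← rTensor_def, mul_antipode_rTensor_comul]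
  ext v
  simp [rTensor_comp_apply]

theorem phiFull_comp_comul : PhiFull ∘ₗ comul (R := k) (A := P) = TensorProduct.mk k P P 1 := by
  simp only [PhiFull, thetaMap, coassoc_simps]
  simp only [← lTensor_def, ← rTensor_def, mul_antipode_lTensor_comul]
  ext v
  simp [rTensor_comp_apply]

theorem psiFull_comp_phiFull : PsiFull ∘ₗ PhiFull (k := k) (P := P) = LinearMap.id := by
  rw [phiFull_eq_extendLeft, psiFull_eq_extendLeft, extendLeft_comp, ← psiFull_eq_extendLeft,
    psiFull_comp_thetaMap, extendLeft_mk_one]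

theorem phiFull_comp_psiFull : PhiFull ∘ₗ PsiFull (k := k) (P := P) = LinearMap.id := by
  rw [phiFull_eq_extendLeft, psiFull_eq_extendLeft, extendLeft_comp, ← phiFull_eq_extendLeft,
    phiFull_comp_comul, extendLeft_mk_one]

theorem thetaMap'_eq_extendLeft_dUniv :
    thetaMap' (k := k) (P := P) = extendLeft dUniv ∘ₗ thetaMap := by
  simp only [thetaMap', thetaMap, extendLeft, ← lTensor_comp_rTensor, comp_assoc]

theorem extendLeft_dUniv (x : P ⊗[k] P) :
    extendLeft dUniv x = x - mul' k P x ⊗ₜ[k] (1 : P) := by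
  induction x using TensorProduct.induction_on with
  | zero => simp
  | tmul a b => simp [extendLeft_tmul, dUniv, smul_tmul', smul_sub]
  | add x y hx hy => simp only [map_add, hx, hy, add_tmul]; abel

theorem thetaMap'_apply (v : P) :
    thetaMap' (k := k) v = thetaMap v - algebraMap k P (counit v) ⊗ₜ[k] (1 : P) := by
  rw [thetaMap'_eq_extendLeft_dUniv, comp_apply, extendLeft_dUniv, thetaMap,
    comp_apply, mul_antipode_rTensor_comul_apply]

theorem thetaMap_eq_thetaMap'_of_counit_eq_zero {v : P} (hv : counit (R := k) v = 0) :
    thetaMap (k := k) v = thetaMap' v := by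
  rw [thetaMap'_apply, hv, map_zero, zero_tmul, sub_zero]

theorem lTensor_counit_comp_psiFull :
    counit.lTensor P ∘ₗ PsiFull (k := k) (P := P)
      = (TensorProduct.mk k P k).flip 1 ∘ₗ mul' k P := by
  ext a b
  simp only [psiFull_eq_extendLeft, AlgebraTensorModule.curry_apply, curry_apply,
    restrictScalars_apply, comp_apply, extendLeft_tmul, lTensor_apply_smul, lTensor_counit_comul,
    mul'_apply, smul_tmul']
  rfl

theorem lTensor_deltaR_comp_comul (π : P →ₐc[k] H) :
    (deltaR π).lTensor P ∘ₗ comul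
      = (TensorProduct.assoc k P P H).toLinearMap ∘ₗ comul.rTensor H ∘ₗ deltaR π := by
  simp only [deltaR, coassoc_simps]

theorem range_lTensor_coinvSub (π : P →ₐc[k] H) :
    range ((coinvSub π).subtype.lTensor P)
      = ker ((deltaR π - (TensorProduct.mk k P H).flip 1).lTensor P) :=
  range_lTensor_subtype_of_eq_ker rfl

theorem comul_mem_range_lTensor_coinvSub (π : P →ₐc[k] H) {m : P} (hm : m ∈ coinvSub π) :
    comul m ∈ range ((coinvSub π).subtype.lTensor P) := by
  have hm' : deltaR π m = m ⊗ₜ 1 := sub_eq_zero.mp hm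
  rw [range_lTensor_coinvSub, mem_ker, lTensor_sub, LinearMap.sub_apply, sub_eq_zero,
    ← comp_apply, lTensor_deltaR_comp_comul, comp_apply, comp_apply, hm', rTensor_tmul,
    lTensor_flip_mk_apply]
  rfl

theorem range_lTensor_vsub (π : P →ₐc[k] H) :
    range ((Vsub π).subtype.lTensor P)
      = range ((coinvSub π).subtype.lTensor P) ⊓ ker (counit.lTensor P) := by
  rw [range_lTensor_subtype_of_eq_ker (ker_prod _ _).symm, ker_lTensor_prod,
    range_lTensor_coinvSub]

theorem thetaMap_mem_range_lTensor_coinvSub (π : P →ₐc[k] H) {m : P} (hm : m ∈ coinvSub π) :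
    thetaMap m ∈ range ((coinvSub π).subtype.lTensor P) := by
  obtain ⟨t, ht⟩ := comul_mem_range_lTensor_coinvSub π hm
  refine ⟨(antipode k).rTensor _ t, ?_⟩
  rw [thetaMap, comp_apply, ← ht, ← comp_apply, ← comp_apply, lTensor_comp_rTensor,
    rTensor_comp_lTensor]

theorem one_mem_coinvSub (π : P →ₐc[k] H) : (1 : P) ∈ coinvSub π := by
  simp only [coinvSub, deltaR, mem_ker, LinearMap.sub_apply, comp_apply, Bialgebra.comul_one,
    Algebra.TensorProduct.one_def, lTensor_tmul, flip_apply, mk_apply, sub_eq_zero]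
  exact congrArg _ (map_one π)

theorem dUniv_mem_omegaOneM (π : P →ₐc[k] H) {m : P} (hm : m ∈ coinvSub π) :
    dUniv m ∈ omegaOneM π := by
  refine ⟨by simp [dUniv], ?_⟩
  let one : coinvSub π := ⟨1, one_mem_coinvSub π⟩
  exact ⟨one ⊗ₜ ⟨m, hm⟩ - ⟨m, hm⟩ ⊗ₜ one, by simp [dUniv, one]⟩

theorem smul_mem_pOmegaOneM (π : P →ₐc[k] H) (p : P) {x : P ⊗[k] P}
    (hx : x ∈ POmegaOneM π) : p • x ∈ POmegaOneM π := by
  induction hx using Submodule.span_induction with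
  | mem x hx =>
    obtain ⟨q, ω, hω, rfl⟩ := hx
    refine Submodule.subset_span ⟨p * q, ω, hω, ?_⟩
    simp only [rTensor_mulLeft_apply, mul_smul]
  | zero => simp
  | add x y _ _ hx hy => simpa only [smul_add] using Submodule.add_mem _ hx hy
  | smul c x _ hx => simpa only [smul_comm p c] using Submodule.smul_mem _ c hx

theorem omegaOneM_le_pOmegaOneM (π : P →ₐc[k] H) : omegaOneM π ≤ POmegaOneM π :=
  fun ω hω => Submodule.subset_span ⟨1, ω, hω, by rw [rTensor_mulLeft_apply, one_smul]⟩

theorem thetaMap_mem_pOmegaOneM (π : P →ₐc[k] H) {v : P} (hv : v ∈ Vsub π) :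
    thetaMap v ∈ POmegaOneM π := by
  rw [thetaMap_eq_thetaMap'_of_counit_eq_zero hv.2, thetaMap'_eq_extendLeft_dUniv, comp_apply]
  exact extendLeft_mem_of_mem_range_lTensor (smul_mem_pOmegaOneM π)
    (fun m hm => omegaOneM_le_pOmegaOneM π (dUniv_mem_omegaOneM π hm))
    (thetaMap_mem_range_lTensor_coinvSub π hv.1)

theorem omegaOneM_le_range_lTensor_coinvSub (π : P →ₐc[k] H) :
    omegaOneM π ≤ range ((coinvSub π).subtype.lTensor P) := by
  rintro ω ⟨-, t, rfl⟩
  exact ⟨(coinvSub π).subtype.rTensor _ t, by rw [← comp_apply, lTensor_comp_rTensor]⟩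

theorem psiFull_mem_range_lTensor_vsub (π : P →ₐc[k] H) {y : P ⊗[k] P}
    (hy : y ∈ POmegaOneM π) : PsiFull y ∈ range ((Vsub π).subtype.lTensor P) := by
  refine (Submodule.span_le (p := (range _).comap PsiFull)).mpr ?_ hy
  rintro _ ⟨p, ω, hω, rfl⟩
  rw [SetLike.mem_coe, Submodule.mem_comap, rTensor_mulLeft_apply, psiFull_eq_extendLeft,
    extendLeft_smul]
  refine smul_mem_range_lTensor p ?_
  rw [range_lTensor_vsub]
  refine Submodule.mem_inf.mpr ⟨?_, ?_⟩
  · exact extendLeft_mem_of_mem_range_lTensor (fun a _ => smul_mem_range_lTensor a)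
      (fun m hm => comul_mem_range_lTensor_coinvSub π hm)
      (omegaOneM_le_range_lTensor_coinvSub π hω)
  · rw [mem_ker, ← psiFull_eq_extendLeft, ← comp_apply, lTensor_counit_comp_psiFull, comp_apply,
      mem_ker.mp hω.1, map_zero]

theorem range_phiV (π : P →ₐc[k] H) : range (PhiV π) = POmegaOneM π := by
  apply le_antisymm
  · rintro _ ⟨t, rfl⟩
    exact extendLeft_mem_of_mem_range_lTensor (smul_mem_pOmegaOneM π)
      (fun v hv => thetaMap_mem_pOmegaOneM π hv) ⟨t, rfl⟩
  · intro y hy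
    obtain ⟨t, ht⟩ := psiFull_mem_range_lTensor_vsub π hy
    exact ⟨t, by rw [PhiV, comp_apply, ht, ← comp_apply, phiFull_comp_psiFull, id_apply]⟩

theorem statement13_general (π : P →ₐc[k] H) :
    -- (a)
    (∀ v ∈ Vsub π, thetaMap (k := k) v = thetaMap' v ∧ thetaMap (k := k) v ∈ POmegaOneM π)
    -- (b)
    ∧ Function.Injective (PhiV π)
    ∧ LinearMap.range (PhiV π) = POmegaOneM π
    ∧ (∀ y ∈ POmegaOneM π, PhiFull (PsiFull y) = y)
    ∧ (∀ x : P ⊗[k] ↥(Vsub π),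
        PsiFull (PhiV π x) = LinearMap.lTensor P (Vsub π).subtype x) := by
  have hPsiPhiV (x : P ⊗[k] Vsub π) : PsiFull (PhiV π x) = (Vsub π).subtype.lTensor P x :=
    LinearMap.congr_fun psiFull_comp_phiFull _
  refine ⟨fun v hv => ⟨thetaMap_eq_thetaMap'_of_counit_eq_zero hv.2,
    thetaMap_mem_pOmegaOneM π hv⟩, ?_, range_phiV π,
    fun y _ => LinearMap.congr_fun phiFull_comp_psiFull y, hPsiPhiV⟩
  have hinj : Function.Injective ((Vsub π).subtype.lTensor P) :=
    Module.Flat.lTensor_preserves_injective_linearMap _ (Submodule.injective_subtype _)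
  exact fun x y hxy => hinj (by rw [← hPsiPhiV, ← hPsiPhiV, hxy])

/-- for a surjective Hopf algebra morphism `π : P → H` (commuting with the
antipodes): (a) for every `v ∈ V = M ∩ ker ε`, `θ(v) = Σ S(v₍₁₎) ⊗ v₍₂₎` equals
`Σ S(v₍₁₎)·(1 ⊗ v₍₂₎ − v₍₂₎ ⊗ 1)` and belongs to `P·Ω¹M`; (b) the maps
`Φ(p ⊗ v) = Σ p S(v₍₁₎) ⊗ v₍₂₎` and `Ψ(a ⊗ b) = Σ a b₍₁₎ ⊗ b₍₂₎` restrict to mutually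
inverse bijections between `P ⊗ V` and `P·Ω¹M`. -/
theorem statement13 (π : P →ₐc[k] H) (hsurj : Function.Surjective π)
    (hS : ∀ x : P, π (HopfAlgebra.antipode (R := k) x)
      = HopfAlgebra.antipode (R := k) (π x)) :
    -- (a)
    (∀ v ∈ Vsub π, thetaMap (k := k) v = thetaMap' v ∧ thetaMap (k := k) v ∈ POmegaOneM π)
    -- (b)
    ∧ Function.Injective (PhiV π)
    ∧ LinearMap.range (PhiV π) = POmegaOneM π
    ∧ (∀ y ∈ POmegaOneM π, PhiFull (PsiFull y) = y)
    ∧ (∀ x : P ⊗[k] ↥(Vsub π),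
        PsiFull (PhiV π x) = LinearMap.lTensor P (Vsub π).subtype x) :=
  statement13_general π
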